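/- arXiv:1205.0609 — 3 statements merged into one kernel-verified Lean document; each statement's English description precedes it below -/
import Mathlib

section
/- Let F : ℕ × ℕ × ℂ → ℂ and let p, q ∈ ℂ be such that for all positive integers a, b and all s ∈ ℂ, F(a,b,s) = p·F(a-1,b,s+1) + q·F(a,b-1,s+1). Then for all positive integers a, b and all s ∈ ℂ, F(a,b,s) = ∑_{j=1}^{b} p^a q^{b-j} C(a+b-j-1, a-1) F(0,j,a+b+s-j) + ∑_{j=1}^{a} p^{a-j} q^{b} C(a+b-j-1, b-1) F(j,0,a+b+s-j). -/
/-!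
Substituting `t = a + b + s` turns the hypothesis into the two-dimensional recurrence
`f (a, b) = p f (a - 1, b) + q f (a, b - 1)` with `t` a mere parameter. Its solution is determined by
the values on the two axes, and it is a sum over lattice paths from `(a, b)` to the axes: the paths
first reaching `(0, j)` have `a` steps of weight `p` and `b - j` of weight `q`, the last step being a
`p`-step, so there are `C(a + b - j - 1, a - 1)` of them. Written with `Nat.multichoose` and indexed
by `k = b - j` (this is `axisSum`), this contribution satisfies the recurrence by Pascal's rule, and
so does the symmetric one from the other axis.
-/

open Finset

variable {R M : Type*} [CommSemiring R] [AddCommMonoid M] [Module R M]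

def axisSum (x y : R) (g : ℕ → M) (a b : ℕ) : M :=
  ∑ k ∈ range b, (x ^ a * y ^ k * (a.multichoose k : R)) • g (b - k)

theorem axisSum_zero_right (x y : R) (g : ℕ → M) (a : ℕ) : axisSum x y g a 0 = 0 := by
  simp [axisSum]

theorem axisSum_zero_succ (x y : R) (g : ℕ → M) (b : ℕ) : axisSum x y g 0 (b + 1) = g (b + 1) := by
  rw [axisSum, sum_range_succ']
  simp

theorem axisSum_succ_succ (x y : R) (g : ℕ → M) (a b : ℕ) :
    axisSum x y g (a + 1) (b + 1) = x • axisSum x y g a (b + 1) + y • axisSum x y g (a + 1) b := by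
  simp only [axisSum, sum_range_succ' _ b, smul_sum, smul_add, smul_smul, Nat.multichoose_succ_succ,
    Nat.multichoose_zero_right, Nat.cast_add, mul_add, add_smul, sum_add_distrib, Nat.sub_zero,
    Nat.add_sub_add_right]
  rw [add_right_comm]
  congr 1
  · congr 1
    · exact sum_congr rfl fun k _ => by congr 1; ring
    · congr 1; ring
  · exact sum_congr rfl fun k _ => by congr 1; ring

theorem eq_of_rec_of_eq_on_axes {p q : R} {f g : ℕ → ℕ → M}
    (hf : ∀ a b, f (a + 1) (b + 1) = p • f a (b + 1) + q • f (a + 1) b)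
    (hg : ∀ a b, g (a + 1) (b + 1) = p • g a (b + 1) + q • g (a + 1) b)
    (h_left : ∀ b, f 0 (b + 1) = g 0 (b + 1)) (h_bottom : ∀ a, f (a + 1) 0 = g (a + 1) 0) :
    ∀ a b, f a (b + 1) = g a (b + 1) := by
  intro a
  induction a with
  | zero => exact h_left
  | succ a iha =>
    intro b
    induction b with
    | zero => rw [hf, hg, iha, h_bottom]
    | succ b ihb => rw [hf, hg, iha, ihb]

theorem eq_axisSum_add_axisSum {p q : R} {f : ℕ → ℕ → M}
    (hf : ∀ a b, f (a + 1) (b + 1) = p • f a (b + 1) + q • f (a + 1) b) (a : ℕ) {b : ℕ}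
    (hb : 1 ≤ b) :
    f a b = axisSum p q (f 0) a b + axisSum q p (fun i => f i 0) b a := by
  obtain ⟨b, rfl⟩ := Nat.exists_eq_add_of_le' hb
  refine eq_of_rec_of_eq_on_axes
    (g := fun a b => axisSum p q (f 0) a b + axisSum q p (fun i => f i 0) b a) hf (fun a b => ?_) (fun b => ?_) (fun a => ?_) a b
  · rw [axisSum_succ_succ, axisSum_succ_succ]
    simp only [smul_add]
    abel
  · rw [axisSum_zero_succ, axisSum_zero_right, add_zero]
  · rw [axisSum_zero_right, axisSum_zero_succ, zero_add]

theorem sum_Icc_choose_eq_axisSum (x y : R) (φ : ℕ → R) {a : ℕ} (ha : 1 ≤ a) (b : ℕ) :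
    ∑ j ∈ Icc 1 b, x ^ a * y ^ (b - j) * ((a + b - j - 1).choose (a - 1) : R) * φ j =
      axisSum x y φ a b := by
  refine sum_nbij' (b - ·) (b - ·) ?_ ?_ ?_ ?_ fun j hj => ?_
  iterate 4 (intro j; simp only [mem_Icc, mem_range]; omega)
  have hj : j ≤ b := (mem_Icc.mp hj).2
  rw [smul_eq_mul, Nat.sub_sub_self hj, Nat.multichoose_eq,
    show a + b - j - 1 = (a - 1) + (b - j) by omega, show a + (b - j) - 1 = (a - 1) + (b - j) by omega,
    Nat.choose_symm_add]

theorem lemma_2_1 (F : ℕ → ℕ → ℂ → ℂ) (p q : ℂ)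
    (hF : ∀ a b : ℕ, 1 ≤ a → 1 ≤ b → ∀ s : ℂ,
      F a b s = p * F (a - 1) b (s + 1) + q * F a (b - 1) (s + 1)) :
    ∀ a b : ℕ, 1 ≤ a → 1 ≤ b → ∀ s : ℂ,
      F a b s =
        (∑ j ∈ Finset.Icc 1 b, p ^ a * q ^ (b - j) *
          (Nat.choose (a + b - j - 1) (a - 1) : ℂ) * F 0 j ((a : ℂ) + b + s - j)) +
        (∑ j ∈ Finset.Icc 1 a, p ^ (a - j) * q ^ b *
          (Nat.choose (a + b - j - 1) (b - 1) : ℂ) * F j 0 ((a : ℂ) + b + s - j)) := by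
  intro a b ha hb s
  let t : ℂ := a + b + s
  let f : ℕ → ℕ → ℂ := fun i j => F i j (t - i - j)
  have hf : ∀ i j, f (i + 1) (j + 1) = p • f i (j + 1) + q • f (i + 1) j := by
    intro i j
    simp only [f, smul_eq_mul]
    rw [hF (i + 1) (j + 1) (by omega) (by omega)]
    push_cast
    ring_nf
  have h_left : f 0 = fun j => F 0 j (t - j) := by simp [f]
  have h_bottom : (fun i => f i 0) = fun i => F i 0 (t - i) := by simp [f]
  have h_second : ∀ j ∈ Icc 1 a, p ^ (a - j) * q ^ b * ((a + b - j - 1).choose (b - 1) : ℂ) *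
      F j 0 (t - j) = q ^ b * p ^ (a - j) * ((b + a - j - 1).choose (b - 1) : ℂ) * F j 0 (t - j) :=
    fun j _ => by rw [add_comm b a]; ring
  calc F a b s = f a b := by simp only [f, t]; ring_nf
    _ = _ := eq_axisSum_add_axisSum hf a hb
    _ = _ := by
      rw [sum_congr rfl h_second, h_left, h_bottom, sum_Icc_choose_eq_axisSum _ _ _ ha,
        sum_Icc_choose_eq_axisSum _ _ _ hb]
end

section
/- For positive integers a, b, c with a ≥ 2, b ≥ 2, c ≥ 2 (ensuring absolute convergence), the Mordell–Tornheim/Witten sum ζ_{sl(3)}(a,b,c) := ∑_{m,n ≥ 1} 1/(m^a n^b (m+n)^c) satisfies ζ_{sl(3)}(a,b,c) = ∑_{j=1}^{a} C(a+b-j-1, b-1) ζ(a+b+c-j, j) + ∑_{j=1}^{b} C(a+b-j-1, a-1) ζ(a+b+c-j, j), where ζ(s,t) = ∑_{m > n ≥ 1} 1/(m^s n^t) is the double Euler sum. -/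
/-- Witten zeta function of sl(3) (Tornheim double sum). -/
noncomputable def wittenSl3 (a b c : ℕ) : ℝ :=
  ∑' (m : ℕ) (n : ℕ), 1 / ((m + 1 : ℝ) ^ a * (n + 1 : ℝ) ^ b * (m + n + 2 : ℝ) ^ c)

/-- Double Euler sum ζ(s,t) = ∑_{m>n≥1} m^{-s} n^{-t}. -/
noncomputable def doubleZeta (s t : ℕ) : ℝ :=
  ∑' (n : ℕ) (k : ℕ), 1 / ((n + k + 2 : ℝ) ^ s * (n + 1 : ℝ) ^ t)

/-!
For `x, y, x + y ≠ 0` the partial fraction expansion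
`1 / (x^a y^b) = ∑_{j ≤ a} C(a+b-j-1, b-1) / (x^j (x+y)^(a+b-j)) + (the same with x ↔ y)`
is, after multiplying by `x^a y^b` and putting `u = x/(x+y)`, `v = y/(x+y)`, the statement that
the two complementary negative-binomial probabilities add up to `u + v = 1`. With `x = m`,
`y = n` it splits each term of the Tornheim sum into terms of double zeta series. All terms
are nonnegative and dominated by the Tornheim terms, which are summable for `a, b ≥ 2`, so the
sums may be interchanged.
-/

open Finset

section NegBinomial

variable {R : Type*} [CommSemiring R] (u v : R)

def negBinomialSum (A B : ℕ) : R :=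
  v ^ (B + 1) * ∑ i ∈ range (A + 1), ((B + i).choose i : R) * u ^ i

lemma negBinomialSum_zero_left (B : ℕ) : negBinomialSum u v 0 B = v ^ (B + 1) := by
  simp [negBinomialSum]

lemma negBinomialSum_zero_right (A : ℕ) :
    negBinomialSum u v A 0 = v * ∑ i ∈ range (A + 1), u ^ i := by
  simp [negBinomialSum]

lemma sum_range_choose_succ_mul_pow (A B : ℕ) :
    ∑ i ∈ range (A + 1 + 1), ((B + 1 + i).choose i : R) * u ^ i =
      ∑ i ∈ range (A + 1 + 1), ((B + i).choose i : R) * u ^ i +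
        u * ∑ i ∈ range (A + 1), ((B + 1 + i).choose i : R) * u ^ i := by
  have pascal : ∀ i, ((B + 1 + (i + 1)).choose (i + 1) : R) * u ^ (i + 1) =
      ((B + (i + 1)).choose (i + 1) : R) * u ^ (i + 1) +
        u * (((B + 1 + i).choose i : R) * u ^ i) := by
    intro i
    rw [show B + 1 + (i + 1) = B + 1 + i + 1 by ring, Nat.choose_succ_succ,
      show B + (i + 1) = B + 1 + i by ring]
    push_cast
    ring
  rw [sum_range_succ' _ (A + 1), sum_range_succ' (fun i => ((B + i).choose i : R) * u ^ i),
    mul_sum, sum_congr rfl fun i _ => pascal i, sum_add_distrib]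
  simp only [add_zero, Nat.choose_zero_right]
  ring

lemma negBinomialSum_succ_succ (A B : ℕ) :
    negBinomialSum u v (A + 1) (B + 1) =
      u * negBinomialSum u v A (B + 1) + v * negBinomialSum u v (A + 1) B := by
  simp only [negBinomialSum, sum_range_choose_succ_mul_pow]
  ring

end NegBinomial

section NegBinomialSplit

variable {R : Type*} [CommRing R] (u v : R)

lemma negBinomialSum_zero_add (h : u + v = 1) (B : ℕ) :
    negBinomialSum u v 0 B + negBinomialSum v u B 0 = 1 := by
  obtain rfl : u = 1 - v := eq_sub_of_add_eq h
  rw [negBinomialSum_zero_left, negBinomialSum_zero_right, mul_neg_geom_sum]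
  ring

/-- With `u + v = 1` the two summands are the probabilities that, in Bernoulli trials with
success probability `v`, the `(B+1)`-st success comes before the `(A+1)`-st failure, and
the other way round. -/
theorem negBinomialSum_add_swap (h : u + v = 1) (A B : ℕ) :
    negBinomialSum u v A B + negBinomialSum v u B A = 1 := by
  induction A generalizing B with
  | zero => exact negBinomialSum_zero_add u v h B
  | succ A ihA =>
    induction B with
    | zero => rw [add_comm]; exact negBinomialSum_zero_add v u (by rwa [add_comm]) (A + 1)
    | succ B ihB =>
      rw [negBinomialSum_succ_succ, negBinomialSum_succ_succ v u]
      linear_combination u * ihA (B + 1) + v * ihB + h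

end NegBinomialSplit

section PartialFractions

variable {K : Type*} [Field K]

lemma negBinomialSum_div {x y s : K} (hx : x ≠ 0) (hy : y ≠ 0) (hs : s ≠ 0) (A B c : ℕ) :
    negBinomialSum (x / s) (y / s) A B / (x ^ (A + 1) * y ^ (B + 1) * s ^ c) =
      ∑ i ∈ range (A + 1),
        ((B + i).choose i : K) / (s ^ (B + 1 + i + c) * x ^ (A + 1 - i)) := by
  rw [negBinomialSum, mul_sum, sum_div]
  refine sum_congr rfl fun i hi => ?_
  obtain ⟨k, hk⟩ := Nat.exists_eq_add_of_le (mem_range.mp hi).le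
  rw [hk, Nat.add_sub_cancel_left, div_pow, div_pow]
  field_simp
  ring

lemma sum_Icc_one_eq_sum_range {M : Type*} [AddCommMonoid M] (f : ℕ → M) (n : ℕ) :
    ∑ j ∈ Icc 1 n, f j = ∑ i ∈ range n, f (n - i) := by
  refine sum_nbij' (fun j => n - j) (fun i => n - i) ?_ ?_ ?_ ?_ ?_ <;> intro j hj <;>
    simp only [mem_Icc, mem_range] at hj ⊢ <;> first | omega | (congr 1; omega)

lemma sum_Icc_choose_div_pow (z s : K) (A B c : ℕ) :
    ∑ j ∈ Icc 1 (A + 1), ((A + 1 + (B + 1) - j - 1).choose (B + 1 - 1) : K) /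
        (s ^ (A + 1 + (B + 1) + c - j) * z ^ j) =
      ∑ i ∈ range (A + 1),
        ((B + i).choose i : K) / (s ^ (B + 1 + i + c) * z ^ (A + 1 - i)) := by
  rw [sum_Icc_one_eq_sum_range]
  refine sum_congr rfl fun i hi => ?_
  have hi : i ≤ A := Nat.lt_succ_iff.mp (mem_range.mp hi)
  rw [show A + 1 + (B + 1) - (A + 1 - i) - 1 = B + i by omega, Nat.add_sub_cancel,
    show A + 1 + (B + 1) + c - (A + 1 - i) = B + 1 + i + c by omega, Nat.choose_symm_add]

theorem one_div_pow_mul_pow_mul_add_pow {x y : K} (hx : x ≠ 0) (hy : y ≠ 0) (hxy : x + y ≠ 0)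
    {a b : ℕ} (ha : a ≠ 0) (hb : b ≠ 0) (c : ℕ) :
    1 / (x ^ a * y ^ b * (x + y) ^ c) =
      ∑ j ∈ Icc 1 a,
          ((a + b - j - 1).choose (b - 1) : K) / ((x + y) ^ (a + b + c - j) * x ^ j) +
        ∑ j ∈ Icc 1 b,
          ((a + b - j - 1).choose (a - 1) : K) / ((x + y) ^ (a + b + c - j) * y ^ j) := by
  obtain ⟨A, rfl⟩ := Nat.exists_eq_succ_of_ne_zero ha
  obtain ⟨B, rfl⟩ := Nat.exists_eq_succ_of_ne_zero hb
  have hsplit := negBinomialSum_add_swap (x / (x + y)) (y / (x + y)) (by field_simp) A B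
  rw [sum_Icc_choose_div_pow, add_comm (A + 1) (B + 1), sum_Icc_choose_div_pow, ← hsplit,
    add_div, negBinomialSum_div hx hy hxy, mul_comm (x ^ _), negBinomialSum_div hy hx hxy]

end PartialFractions

section TornheimSum

noncomputable def tornheimTerm (a b c : ℕ) (p : ℕ × ℕ) : ℝ :=
  1 / ((p.1 + 1 : ℝ) ^ a * (p.2 + 1 : ℝ) ^ b * (p.1 + p.2 + 2 : ℝ) ^ c)

noncomputable def doubleZetaTerm (s t : ℕ) (p : ℕ × ℕ) : ℝ :=
  1 / ((p.1 + p.2 + 2 : ℝ) ^ s * (p.1 + 1 : ℝ) ^ t)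

lemma summable_one_div_nat_add_one_pow {a : ℕ} (ha : 1 < a) :
    Summable fun n : ℕ => 1 / ((n : ℝ) + 1) ^ a := by
  simpa using (summable_nat_add_iff 1).mpr (Real.summable_one_div_nat_pow.mpr ha)

lemma summable_tornheimTerm {a b : ℕ} (ha : 1 < a) (hb : 1 < b) (c : ℕ) :
    Summable (tornheimTerm a b c) := by
  have hprod := (summable_one_div_nat_add_one_pow ha).mul_of_nonneg
    (summable_one_div_nat_add_one_pow hb) (fun _ => by positivity) fun _ => by positivity
  refine hprod.of_nonneg_of_le (fun _ => by rw [tornheimTerm]; positivity) fun p => ?_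
  have hs : (1 : ℝ) ≤ p.1 + p.2 + 2 := by
    linarith [p.1.cast_nonneg (α := ℝ), p.2.cast_nonneg (α := ℝ)]
  rw [tornheimTerm, one_div_mul_one_div]
  exact one_div_le_one_div_of_le (by positivity)
    (le_mul_of_one_le_right (by positivity) (one_le_pow₀ hs))

lemma doubleZetaTerm_le_tornheimTerm {a j : ℕ} (hj : j ≤ a) (b c : ℕ) (p : ℕ × ℕ) :
    doubleZetaTerm (a + b + c - j) j p ≤ tornheimTerm a b c p := by
  obtain ⟨k, rfl⟩ := Nat.exists_eq_add_of_le hj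
  have hx : (p.1 + 1 : ℝ) ≤ p.1 + p.2 + 2 := by linarith [p.2.cast_nonneg (α := ℝ)]
  have hy : (p.2 + 1 : ℝ) ≤ p.1 + p.2 + 2 := by linarith [p.1.cast_nonneg (α := ℝ)]
  rw [doubleZetaTerm, tornheimTerm, show j + k + b + c - j = k + b + c by omega]
  refine one_div_le_one_div_of_le (by positivity) ?_
  calc (p.1 + 1 : ℝ) ^ (j + k) * (p.2 + 1) ^ b * (p.1 + p.2 + 2) ^ c
      = (p.1 + 1) ^ k * (p.2 + 1) ^ b * (p.1 + p.2 + 2) ^ c * (p.1 + 1) ^ j := by ring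
    _ ≤ (p.1 + p.2 + 2) ^ k * (p.1 + p.2 + 2) ^ b * (p.1 + p.2 + 2) ^ c * (p.1 + 1) ^ j := by
      gcongr
    _ = (p.1 + p.2 + 2) ^ (k + b + c) * (p.1 + 1) ^ j := by ring

lemma summable_doubleZetaTerm {a b j : ℕ} (ha : 1 < a) (hb : 1 < b) (hj : j ≤ a) (c : ℕ) :
    Summable (doubleZetaTerm (a + b + c - j) j) :=
  (summable_tornheimTerm ha hb c).of_nonneg_of_le (fun _ => by rw [doubleZetaTerm]; positivity)
    (doubleZetaTerm_le_tornheimTerm hj b c)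

lemma wittenSl3_eq_tsum {a b c : ℕ} (h : Summable (tornheimTerm a b c)) :
    wittenSl3 a b c = ∑' p, tornheimTerm a b c p :=
  h.tsum_prod.symm

lemma doubleZeta_eq_tsum {s t : ℕ} (h : Summable (doubleZetaTerm s t)) :
    doubleZeta s t = ∑' p, doubleZetaTerm s t p :=
  h.tsum_prod.symm

lemma doubleZeta_eq_tsum_swap {s t : ℕ} (h : Summable (doubleZetaTerm s t)) :
    doubleZeta s t = ∑' p : ℕ × ℕ, doubleZetaTerm s t p.swap :=
  (doubleZeta_eq_tsum h).trans ((Equiv.prodComm ℕ ℕ).tsum_eq _).symm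

lemma tornheimTerm_eq_sum {a b : ℕ} (ha : a ≠ 0) (hb : b ≠ 0) (c : ℕ) (p : ℕ × ℕ) :
    tornheimTerm a b c p =
      ∑ j ∈ Icc 1 a,
          ((a + b - j - 1).choose (b - 1) : ℝ) * doubleZetaTerm (a + b + c - j) j p +
        ∑ j ∈ Icc 1 b,
          ((a + b - j - 1).choose (a - 1) : ℝ) * doubleZetaTerm (a + b + c - j) j p.swap := by
  have hsum : (p.1 + p.2 + 2 : ℝ) = (p.1 + 1) + (p.2 + 1) := by ring
  have hsum_swap : (p.2 + p.1 + 2 : ℝ) = (p.1 + 1) + (p.2 + 1) := by ring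
  simp only [tornheimTerm, doubleZetaTerm, Prod.fst_swap, Prod.snd_swap, mul_one_div]
  rw [hsum, hsum_swap]
  have hx : (p.1 + 1 : ℝ) ≠ 0 := by positivity
  have hy : (p.2 + 1 : ℝ) ≠ 0 := by positivity
  exact one_div_pow_mul_pow_mul_add_pow hx hy (by positivity) ha hb c

end TornheimSum

theorem wittenSl3_reduction_general (a b c : ℕ) (ha : 2 ≤ a) (hb : 2 ≤ b) :
    wittenSl3 a b c =
      (∑ j ∈ Finset.Icc 1 a, (Nat.choose (a + b - j - 1) (b - 1) : ℝ) *
        doubleZeta (a + b + c - j) j) +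
      (∑ j ∈ Finset.Icc 1 b, (Nat.choose (a + b - j - 1) (a - 1) : ℝ) *
        doubleZeta (a + b + c - j) j) := by
  have hsum_a : ∀ j ∈ Icc 1 a, Summable (doubleZetaTerm (a + b + c - j) j) :=
    fun j hj => summable_doubleZetaTerm ha hb (mem_Icc.mp hj).2 c
  have hsum_b : ∀ j ∈ Icc 1 b, Summable (doubleZetaTerm (a + b + c - j) j) :=
    fun j hj => by simpa only [add_comm b a] using summable_doubleZetaTerm hb ha (mem_Icc.mp hj).2 c
  rw [wittenSl3_eq_tsum (summable_tornheimTerm ha hb c),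
    tsum_congr (tornheimTerm_eq_sum (by omega) (by omega) c),
    Summable.tsum_add (summable_sum fun j hj => (hsum_a j hj).mul_left _)
      (summable_sum fun j hj => (hsum_b j hj).prod_symm.mul_left _),
    Summable.tsum_finsetSum fun j hj => (hsum_a j hj).mul_left _,
    Summable.tsum_finsetSum fun j hj => (hsum_b j hj).prod_symm.mul_left _]
  congr 1 <;> refine sum_congr rfl fun j hj => ?_ <;> rw [tsum_mul_left]
  · rw [doubleZeta_eq_tsum (hsum_a j hj)]
  · rw [doubleZeta_eq_tsum_swap (hsum_b j hj)]

theorem wittenSl3_reduction (a b c : ℕ) (ha : 2 ≤ a) (hb : 2 ≤ b) (hc : 2 ≤ c) :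
    wittenSl3 a b c =
      (∑ j ∈ Finset.Icc 1 a, (Nat.choose (a + b - j - 1) (b - 1) : ℝ) *
        doubleZeta (a + b + c - j) j) +
      (∑ j ∈ Finset.Icc 1 b, (Nat.choose (a + b - j - 1) (a - 1) : ℝ) *
        doubleZeta (a + b + c - j) j) :=
  wittenSl3_reduction_general a b c ha hb
end

section
/- For positive integers a, b, c, d, f with c, f ≥ 1 and all other exponents large enough for convergence, and positive integers n₁, n₂, n₃: 1/(n₁^a n₂^b n₃^c (n₁+n₂)^d (n₁+n₂+n₃)^f) = ∑_{i=1}^{c} C(c+f−i−1, f−1) (−1)^{c+i} / (n₁^a n₂^b n₃^i (n₁+n₂)^{c+d+f−i}) + ∑_{i=1}^{f} C(c+f−i−1, c−1) (−1)^{c} / (n₁^a n₂^b (n₁+n₂)^{c+d+f−i} (n₁+n₂+n₃)^i). -/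
/-!
Put `M = n₁ + n₂`, `X = M / n₃` and `Y = M / (M + n₃)`. Then `1 / Y = 1 + 1 / X`, i.e.
`X * Y = X - Y`, and repeatedly replacing `X * Y` by `X - Y` reduces `X ^ c * Y ^ f` to a
combination of pure powers of `X` and of `Y` whose coefficients obey Pascal's rule. Dividing by
`n₁ ^ a * n₂ ^ b * M ^ (c + d + f)` turns this into the stated identity.
-/

open Finset

section PartialFraction

variable {R : Type*} [CommRing R] {X Y : R}

theorem mul_pow_succ_eq_sub_sum (h : X * Y = X - Y) (f : ℕ) :
    X * Y ^ (f + 1) = X - ∑ j ∈ range (f + 1), Y ^ (j + 1) := by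
  induction f with
  | zero => simpa using h
  | succ f ih =>
    rw [sum_range_succ', pow_succ, ← mul_assoc, ih, sub_mul, h, sum_mul]
    simp only [← pow_succ, zero_add, pow_one]
    abel

theorem pow_succ_mul_eq_sum_add (h : X * Y = X - Y) (c : ℕ) :
    X ^ (c + 1) * Y =
      ∑ j ∈ range (c + 1), (-1) ^ (c + j) * X ^ (j + 1) + (-1) ^ (c + 1) * Y := by
  induction c with
  | zero => simp [h, sub_eq_add_neg]
  | succ c ih =>
    have hterm (j : ℕ) : X * ((-1) ^ (c + j) * X ^ (j + 1)) =
        (-1) ^ (c + 1 + (j + 1)) * X ^ (j + 1 + 1) := by ring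
    rw [sum_range_succ', pow_succ', mul_assoc, ih, mul_add, mul_sum, mul_left_comm, h]
    simp only [hterm]
    ring

theorem pow_succ_mul_pow_succ_eq_sum (h : X * Y = X - Y) : ∀ c f : ℕ,
    X ^ (c + 1) * Y ^ (f + 1) =
      ∑ j ∈ range (c + 1), ((c + f - j).choose f : R) * (-1) ^ (c + j) * X ^ (j + 1) +
        ∑ j ∈ range (f + 1), ((c + f - j).choose c : R) * (-1) ^ (c + 1) * Y ^ (j + 1)
  | 0, f => by
    simp [mul_pow_succ_eq_sub_sum h, sub_eq_add_neg]
  | c + 1, 0 => by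
    simp [pow_succ_mul_eq_sum_add h]
  | c + 1, f + 1 => by
    have hstep :
        X ^ (c + 2) * Y ^ (f + 2) = X ^ (c + 2) * Y ^ (f + 1) - X ^ (c + 1) * Y ^ (f + 2) := by
      linear_combination X ^ (c + 1) * Y ^ (f + 1) * h
    have hX :
        ∑ j ∈ range (c + 1), ((c + (f + 1) - j).choose (f + 1) : R) * (-1) ^ (c + j) * X ^ (j + 1) =
          ∑ j ∈ range (c + 2),
            ((c + (f + 1) - j).choose (f + 1) : R) * (-1) ^ (c + j) * X ^ (j + 1) := by
      rw [sum_range_succ _ (c + 1),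
        Nat.choose_eq_zero_of_lt (by omega : c + (f + 1) - (c + 1) < f + 1)]
      simp
    have hY :
        ∑ j ∈ range (f + 1), ((c + 1 + f - j).choose (c + 1) : R) * (-1) ^ (c + 2) * Y ^ (j + 1) =
          ∑ j ∈ range (f + 2),
            ((c + 1 + f - j).choose (c + 1) : R) * (-1) ^ (c + 2) * Y ^ (j + 1) := by
      rw [sum_range_succ _ (f + 1),
        Nat.choose_eq_zero_of_lt (by omega : c + 1 + f - (f + 1) < c + 1)]
      simp
    rw [hstep, pow_succ_mul_pow_succ_eq_sum h (c + 1) f, pow_succ_mul_pow_succ_eq_sum h c (f + 1),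
      hX, hY, add_sub_add_comm, ← sum_sub_distrib, ← sum_sub_distrib]
    congr 1 <;> refine sum_congr rfl fun j hj => ?_ <;> rw [mem_range] at hj
    · have hpascal : (c + 1 + (f + 1) - j).choose (f + 1) =
          (c + 1 + f - j).choose f + (c + (f + 1) - j).choose (f + 1) := by
        rw [show c + 1 + (f + 1) - j = c + (f + 1) - j + 1 by omega,
          show c + 1 + f - j = c + (f + 1) - j by omega, Nat.choose_succ_succ']
      rw [hpascal, Nat.cast_add]
      ring
    · have hpascal : (c + 1 + (f + 1) - j).choose (c + 1) =
          (c + 1 + f - j).choose (c + 1) + (c + (f + 1) - j).choose c := by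
        rw [show c + 1 + (f + 1) - j = c + 1 + f - j + 1 by omega,
          show c + (f + 1) - j = c + 1 + f - j by omega, Nat.choose_succ_succ', add_comm]
      rw [hpascal, Nat.cast_add]
      ring

theorem pow_mul_pow_eq_sum_Icc (h : X * Y = X - Y) {c f : ℕ} (hc : 1 ≤ c) (hf : 1 ≤ f) :
    X ^ c * Y ^ f =
      ∑ i ∈ Icc 1 c, ((c + f - i - 1).choose (f - 1) : R) * (-1) ^ (c + i) * X ^ i +
        ∑ i ∈ Icc 1 f, ((c + f - i - 1).choose (c - 1) : R) * (-1) ^ c * Y ^ i := by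
  obtain ⟨c, rfl⟩ := Nat.exists_eq_add_of_le' hc
  obtain ⟨f, rfl⟩ := Nat.exists_eq_add_of_le' hf
  rw [pow_succ_mul_pow_succ_eq_sum h, ← Ico_add_one_right_eq_Icc, ← Ico_add_one_right_eq_Icc,
    sum_Ico_eq_sum_range, sum_Ico_eq_sum_range]
  congr 1 <;> refine sum_congr rfl fun j _ => ?_
  · rw [show c + 1 + (f + 1) - (1 + j) - 1 = c + f - j by omega, add_comm 1 j,
      show c + 1 + (j + 1) = c + j + 2 by omega, pow_add _ (c + j)]
    simp
  · rw [show c + 1 + (f + 1) - (1 + j) - 1 = c + f - j by omega, add_comm 1 j]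
    simp

end PartialFraction

theorem div_pow_div_mul_pow {K : Type*} [Field K] {M : K} (hM : M ≠ 0) (u A : K) {i N : ℕ}
    (hi : i ≤ N) : (M / u) ^ i / (A * M ^ N) = 1 / (A * u ^ i * M ^ (N - i)) := by
  obtain ⟨k, rfl⟩ := Nat.exists_eq_add_of_le hi
  rw [Nat.add_sub_cancel_left, div_pow, div_div, pow_add,
    show u ^ i * (A * (M ^ i * M ^ k)) = A * u ^ i * M ^ k * M ^ i by ring,
    ← mul_div_mul_right 1 _ (pow_ne_zero i hM), one_mul]

theorem pointwise_partial_fraction_general (a b c d f : ℕ)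
    (hc : 1 ≤ c) (hf : 1 ≤ f)
    (n₁ n₂ n₃ : ℕ) (hn₁ : 1 ≤ n₁) (hn₃ : 1 ≤ n₃) :
    1 / ((n₁ : ℝ) ^ a * (n₂ : ℝ) ^ b * (n₃ : ℝ) ^ c * ((n₁ : ℝ) + n₂) ^ d *
        ((n₁ : ℝ) + n₂ + n₃) ^ f) =
      (∑ i ∈ Finset.Icc 1 c, (Nat.choose (c + f - i - 1) (f - 1) : ℝ) * (-1) ^ (c + i) /
        ((n₁ : ℝ) ^ a * (n₂ : ℝ) ^ b * (n₃ : ℝ) ^ i * ((n₁ : ℝ) + n₂) ^ (c + d + f - i))) +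
      (∑ i ∈ Finset.Icc 1 f, (Nat.choose (c + f - i - 1) (c - 1) : ℝ) * (-1) ^ c /
        ((n₁ : ℝ) ^ a * (n₂ : ℝ) ^ b * ((n₁ : ℝ) + n₂) ^ (c + d + f - i) *
          ((n₁ : ℝ) + n₂ + n₃) ^ i)) := by
  set A : ℝ := (n₁ : ℝ) ^ a * (n₂ : ℝ) ^ b
  set M : ℝ := (n₁ : ℝ) + n₂
  have hM : M ≠ 0 := by positivity
  have hn₃' : (n₃ : ℝ) ≠ 0 := by positivity
  have hV : M + n₃ ≠ 0 := by positivity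
  have hXY : M / n₃ * (M / (M + n₃)) = M / n₃ - M / (M + n₃) := by
    field_simp
    ring
  have hlhs : 1 / (A * n₃ ^ c * M ^ d * (M + n₃) ^ f) =
      (M / n₃) ^ c * (M / (M + n₃)) ^ f / (A * M ^ (c + d + f)) := by
    rw [div_pow, div_pow, div_mul_div_comm, div_div, pow_add, pow_add,
      show n₃ ^ c * (M + n₃) ^ f * (A * (M ^ c * M ^ d * M ^ f)) =
        A * n₃ ^ c * M ^ d * (M + n₃) ^ f * (M ^ c * M ^ f) by ring,
      ← mul_div_mul_right 1 _ (by positivity : M ^ c * M ^ f ≠ 0), one_mul]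
  rw [hlhs, pow_mul_pow_eq_sum_Icc hXY hc hf, add_div, sum_div, sum_div]
  congr 1 <;> refine sum_congr rfl fun i hi => ?_ <;> rw [mem_Icc] at hi
  · rw [mul_div_assoc, div_pow_div_mul_pow hM _ _ (by omega), mul_one_div]
  · rw [mul_div_assoc, div_pow_div_mul_pow hM _ _ (by omega), mul_one_div, mul_right_comm A]

theorem pointwise_partial_fraction (a b c d f : ℕ)
    (ha : 1 ≤ a) (hb : 1 ≤ b) (hc : 1 ≤ c) (hd : 1 ≤ d) (hf : 1 ≤ f)
    (n₁ n₂ n₃ : ℕ) (hn₁ : 1 ≤ n₁) (hn₂ : 1 ≤ n₂) (hn₃ : 1 ≤ n₃) :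
    1 / ((n₁ : ℝ) ^ a * (n₂ : ℝ) ^ b * (n₃ : ℝ) ^ c * ((n₁ : ℝ) + n₂) ^ d *
        ((n₁ : ℝ) + n₂ + n₃) ^ f) =
      (∑ i ∈ Finset.Icc 1 c, (Nat.choose (c + f - i - 1) (f - 1) : ℝ) * (-1) ^ (c + i) /
        ((n₁ : ℝ) ^ a * (n₂ : ℝ) ^ b * (n₃ : ℝ) ^ i * ((n₁ : ℝ) + n₂) ^ (c + d + f - i))) +
      (∑ i ∈ Finset.Icc 1 f, (Nat.choose (c + f - i - 1) (c - 1) : ℝ) * (-1) ^ c /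
        ((n₁ : ℝ) ^ a * (n₂ : ℝ) ^ b * ((n₁ : ℝ) + n₂) ^ (c + d + f - i) *
          ((n₁ : ℝ) + n₂ + n₃) ^ i)) :=
  pointwise_partial_fraction_general a b c d f hc hf n₁ n₂ n₃ hn₁ hn₃
end
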